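/- arXiv:2008.13302 — 3 statements merged into one kernel-verified Lean document; each statement's English description precedes it below -/
import Mathlib

section
/- For every integer k ≥ 1: every finite connected graph of metric dimension at most k has maximum degree at most 3^k − 1, and there exists a finite connected graph of metric dimension at most k having a vertex of degree exactly 3^k − 1. That is, the maximum possible degree of a graph of metric dimension at most k is 3^k − 1. -/
/-!
If `S` resolves `G` and `u` is a neighbour of `v`, then `|d(u,w) - d(v,w)| ≤ 1` for every
`w ∈ S`. So the distance vectors to `S` of `v` and of its neighbours are pairwise distinct points
of a box with `3 ^ |S|` points, and `deg v + 1 ≤ 3 ^ |S|`.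

For sharpness take, inside `D_k`, the cube `{0,1,2}^k` together with the landmarks
`1 + 2 e_j`. The landmark `j` is adjacent exactly to the cube points `x` with `x j = 2`, and
coordinates are 1-Lipschitz along edges, so its distance to a cube point `x` is `3 - x j`.
Hence the `k` landmarks resolve the graph, while the centre `1` is adjacent to all `3 ^ k - 1`
other cube points.
-/

open SimpleGraph

/-- `S` is a resolving set for `G`: any two distinct vertices are distinguished
by their graph distance to some landmark in `S`. -/
def IsResolvingSet {V : Type*} (G : SimpleGraph V) (S : Set V) : Prop :=
  ∀ u v : V, u ≠ v → ∃ w ∈ S, G.dist u w ≠ G.dist v w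

/-- The metric dimension of `G`: the least size of a (finite) resolving set. -/
noncomputable def metricDim {V : Type*} (G : SimpleGraph V) : ℕ :=
  sInf {k | ∃ S : Finset V, IsResolvingSet G ↑S ∧ S.card = k}

/-- Distance from an edge `e = {u,v}` to a vertex `w`: `min (d(u,w)) (d(v,w))`. -/
noncomputable def edgeDist {V : Type*} (G : SimpleGraph V) (e : Sym2 V) (w : V) : ℕ :=
  Sym2.lift ⟨fun u v => min (G.dist u w) (G.dist v w), fun u v => by simp [min_comm]⟩ e

/-- `S` is an edge resolving set for `G`: any two distinct edges are distinguished
by their distance to some landmark in `S`. -/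
def IsEdgeResolvingSet {V : Type*} (G : SimpleGraph V) (S : Set V) : Prop :=
  ∀ e ∈ G.edgeSet, ∀ f ∈ G.edgeSet, e ≠ f → ∃ w ∈ S, edgeDist G e w ≠ edgeDist G f w

/-- The edge metric dimension of `G`: the least size of a (finite) edge resolving set. -/
noncomputable def edgeMetricDim {V : Type*} (G : SimpleGraph V) : ℕ :=
  sInf {k | ∃ S : Finset V, IsEdgeResolvingSet G ↑S ∧ S.card = k}

/-- `G` contains `H` as a subgraph: there is an injective graph homomorphism `H → G`. -/
def Contains {V W : Type*} (G : SimpleGraph V) (H : SimpleGraph W) : Prop :=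
  ∃ f : H →g G, Function.Injective f

/-- The graph `D_k` on `ℤ_{≥0}^k`: distinct points are adjacent iff they differ
by at most 1 in every coordinate. -/
def Dgraph (k : ℕ) : SimpleGraph (Fin k → ℕ) where
  Adj x y := x ≠ y ∧ ∀ i, x i ≤ y i + 1 ∧ y i ≤ x i + 1
  symm := ⟨fun _x _y h => ⟨h.1.symm, fun i => ⟨(h.2 i).2, (h.2 i).1⟩⟩⟩
  loopless := ⟨fun _x h => h.1 rfl⟩

namespace IsResolvingSet

variable {V : Type*} {G : SimpleGraph V}

theorem injective_dist {S : Set V} (hS : IsResolvingSet G S) :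
    Function.Injective fun (u : V) (w : S) => G.dist u w := by
  intro u u' h
  by_contra hne
  obtain ⟨w, hw, hdist⟩ := hS u u' hne
  exact hdist (congrFun h ⟨w, hw⟩)

theorem ncard_neighborSet_lt {S : Finset V} (hS : IsResolvingSet G S) (v : V) :
    (G.neighborSet v).ncard < 3 ^ S.card := by
  classical
  set profile : V → S → ℕ := fun u w => G.dist u w
  set box := Fintype.piFinset fun w : S => Finset.Icc (G.dist v w - 1) (G.dist v w + 1)
  have hmaps : ∀ u ∈ insert v (G.neighborSet v), profile u ∈ box := by
    rintro u (rfl | hu)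
    · simp [box, profile]
    · simp only [box, profile, Fintype.mem_piFinset, Finset.mem_Icc]
      intro w
      have hstep := SimpleGraph.Adj.diff_dist_adj (G := G) (u := w) hu
      rw [G.dist_comm (u := u), G.dist_comm (u := v)]
      omega
  have hinj : Set.InjOn profile (insert v (G.neighborSet v)) := hS.injective_dist.injOn
  have hfin : (insert v (G.neighborSet v)).Finite :=
    Set.Finite.of_finite_image (box.finite_toSet.subset (Set.image_subset_iff.2 hmaps)) hinj
  calc (G.neighborSet v).ncard
      < (insert v (G.neighborSet v)).ncard := by
        rw [Set.ncard_insert_of_notMem G.notMem_neighborSet_self (hfin.subset (by simp))]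
        exact Nat.lt_succ_self _
    _ ≤ (box : Set (S → ℕ)).ncard :=
        Set.ncard_le_ncard_of_injOn profile hmaps hinj box.finite_toSet
    _ = ∏ w : S, (Finset.Icc (G.dist v w - 1) (G.dist v w + 1)).card := by
        rw [Set.ncard_coe_finset, Fintype.card_piFinset]
    _ ≤ 3 ^ S.card := by
        refine (Finset.prod_le_pow_card _ _ 3 fun w _ => ?_).trans_eq (by simp)
        rw [Nat.card_Icc]
        omega

end IsResolvingSet

theorem SimpleGraph.Connected.isResolvingSet_univ {V : Type*} {G : SimpleGraph V}
    (hG : G.Connected) : IsResolvingSet G Set.univ :=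
  fun u _ huv => ⟨u, trivial, by rw [dist_self]; exact (hG.pos_dist_of_ne huv.symm).ne⟩

theorem SimpleGraph.Connected.exists_isResolvingSet_card_eq_metricDim {V : Type*} [Finite V]
    {G : SimpleGraph V} (hG : G.Connected) :
    ∃ S : Finset V, IsResolvingSet G S ∧ S.card = metricDim G := by
  have := Fintype.ofFinite V
  exact Nat.sInf_mem (s := {k | ∃ S : Finset V, IsResolvingSet G ↑S ∧ S.card = k})
    ⟨_, Finset.univ, by simpa using hG.isResolvingSet_univ, rfl⟩

theorem SimpleGraph.Connected.ncard_neighborSet_le_of_metricDim_le {V : Type*} [Finite V]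
    {G : SimpleGraph V} (hG : G.Connected) {k : ℕ} (hk : metricDim G ≤ k) (v : V) :
    (G.neighborSet v).ncard ≤ 3 ^ k - 1 := by
  obtain ⟨S, hS, hcard⟩ := hG.exists_isResolvingSet_card_eq_metricDim
  have hlt := hS.ncard_neighborSet_lt v
  have hpow : 3 ^ S.card ≤ 3 ^ k := Nat.pow_le_pow_right (by norm_num) (hcard ▸ hk)
  omega

theorem Dgraph.adj_iff {k : ℕ} {x y : Fin k → ℕ} :
    (Dgraph k).Adj x y ↔ x ≠ y ∧ ∀ i, x i ≤ y i + 1 ∧ y i ≤ x i + 1 :=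
  Iff.rfl

theorem Dgraph.adj_update_succ {k : ℕ} {x : Fin k → ℕ} (j : Fin k) :
    (Dgraph k).Adj x (Function.update x j (x j + 1)) := by
  refine ⟨fun h => by simpa using congrFun h j, fun i => ?_⟩
  rcases eq_or_ne i j with rfl | hij
  · simp only [Function.update_self]; omega
  · simp [hij]

theorem SimpleGraph.Reachable.le_add_dist {V : Type*} {G : SimpleGraph V} {a b : V}
    (h : G.Reachable a b) {f : V → ℕ} (hf : ∀ ⦃x y⦄, G.Adj x y → f y ≤ f x + 1) :
    f b ≤ f a + G.dist a b := by
  obtain ⟨p, hp⟩ := h.exists_walk_length_eq_dist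
  rw [← hp]
  clear hp h
  induction p with
  | nil => simp
  | cons hadj _ ih => have := hf hadj; rw [Walk.length_cons]; omega

namespace CubeWithLandmarks

variable {k : ℕ}

def cube (k : ℕ) : Set (Fin k → ℕ) := Set.univ.pi fun _ => Set.Iic 2

def landmark (j : Fin k) : Fin k → ℕ := Function.update 1 j 3

def verts (k : ℕ) : Set (Fin k → ℕ) := cube k ∪ Set.range landmark

abbrev graph (k : ℕ) : SimpleGraph (verts k) := (Dgraph k).induce (verts k)

theorem mem_cube {x : Fin k → ℕ} : x ∈ cube k ↔ ∀ i, x i ≤ 2 := by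
  simp only [cube, Set.mem_univ_pi, Set.mem_Iic]

theorem landmark_apply (j i : Fin k) : landmark j i = if i = j then 3 else 1 := by
  simp [landmark, Function.update_apply]

theorem landmark_injective : Function.Injective (landmark (k := k)) := by
  intro i j h
  by_contra hij
  have := congrFun h i
  simp [landmark_apply, hij] at this

instance : Finite (verts k) :=
  ((Set.Finite.pi fun _ => Set.finite_Iic 2).union (Set.finite_range landmark)).to_subtype

def center (k : ℕ) : verts k := ⟨1, Or.inl (mem_cube.2 fun _ => by simp)⟩

def landmarkVert (j : Fin k) : verts k := ⟨landmark j, Or.inr ⟨j, rfl⟩⟩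

theorem dgraph_adj_one_iff {x : Fin k → ℕ} :
    (Dgraph k).Adj 1 x ↔ 1 ≠ x ∧ x ∈ cube k := by
  simp only [Dgraph.adj_iff, mem_cube, Pi.one_apply]
  exact and_congr_right fun _ => forall_congr' fun i => by omega

theorem dgraph_adj_landmark {x : Fin k → ℕ} (hx : x ∈ cube k) {j : Fin k} (hj : x j = 2) :
    (Dgraph k).Adj x (landmark j) := by
  rw [mem_cube] at hx
  refine ⟨fun h => by simp [h, landmark_apply] at hj, fun i => ?_⟩
  have := hx i
  rw [landmark_apply]
  split_ifs with hij
  · subst hij; omega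
  · omega

theorem mem_cube_or_eq_landmarkVert (a : verts k) : a.1 ∈ cube k ∨ ∃ j, a = landmarkVert j :=
  a.2.imp_right fun ⟨j, hj⟩ => ⟨j, Subtype.ext hj.symm⟩

theorem reachable_center_of_mem_cube {a : verts k} (ha : a.1 ∈ cube k) :
    (graph k).Reachable (center k) a := by
  by_cases h : center k = a
  · rw [h]
  · exact Adj.reachable (dgraph_adj_one_iff.2 ⟨Subtype.coe_ne_coe.2 h, ha⟩)

theorem reachable_center (a : verts k) : (graph k).Reachable (center k) a := by
  obtain ha | ⟨j, rfl⟩ := mem_cube_or_eq_landmarkVert a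
  · exact reachable_center_of_mem_cube ha
  · have hb : Function.update (1 : Fin k → ℕ) j 2 ∈ cube k := mem_cube.2 fun i => by
      rcases eq_or_ne i j with rfl | hij <;> simp [*]
    have hbl : (graph k).Adj ⟨_, Or.inl hb⟩ (landmarkVert j) := dgraph_adj_landmark hb (by simp)
    exact (reachable_center_of_mem_cube hb).trans hbl.reachable

theorem connected : (graph k).Connected :=
  (connected_iff_exists_forall_reachable _).2 ⟨center k, reachable_center⟩

theorem dist_landmarkVert_le (j : Fin k) {a : verts k} (ha : a.1 ∈ cube k) :
    (graph k).dist a (landmarkVert j) ≤ 3 - a.1 j := by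
  obtain ⟨n, hn⟩ : ∃ n, a.1 j + n = 2 := ⟨2 - a.1 j, by have := mem_cube.1 ha j; omega⟩
  induction n generalizing a with
  | zero =>
    have hadj : (graph k).Adj a (landmarkVert j) := dgraph_adj_landmark ha hn
    rw [dist_eq_one_iff_adj.2 hadj]
    omega
  | succ n ih =>
    have hb : Function.update a.1 j (a.1 j + 1) ∈ cube k := mem_cube.2 fun i => by
      rcases eq_or_ne i j with rfl | hij
      · simp only [Function.update_self]; omega
      · simpa [hij] using mem_cube.1 ha i
    set b : verts k := ⟨_, Or.inl hb⟩
    have hab : (graph k).Adj a b := Dgraph.adj_update_succ j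
    have hbj : b.1 j = a.1 j + 1 := by simp [b]
    calc (graph k).dist a (landmarkVert j)
        ≤ (graph k).dist a b + (graph k).dist b (landmarkVert j) :=
          hab.reachable.dist_triangle_left _
      _ ≤ 1 + (3 - b.1 j) := by
          rw [dist_eq_one_iff_adj.2 hab]
          exact Nat.add_le_add_left (ih hb (by omega)) 1
      _ = 3 - a.1 j := by omega

theorem dist_landmarkVert {a : verts k} (ha : a.1 ∈ cube k) (j : Fin k) :
    (graph k).dist a (landmarkVert j) = 3 - a.1 j := by
  refine le_antisymm (dist_landmarkVert_le j ha) ?_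
  have hlow : (landmarkVert j).1 j ≤ a.1 j + (graph k).dist a (landmarkVert j) :=
    ((reachable_center a).symm.trans (reachable_center _)).le_add_dist
      (f := fun b : verts k => b.1 j) fun x y hxy => (hxy.2 j).2
  have h3 : (landmarkVert j).1 j = 3 := by simp [landmarkVert, landmark_apply]
  omega

noncomputable def landmarks (k : ℕ) : Finset (verts k) := Finset.univ.image landmarkVert

theorem card_landmarks : (landmarks k).card = k := by
  rw [landmarks, Finset.card_image_of_injective _
    fun i j h => landmark_injective (congrArg Subtype.val h)]
  simp

theorem isResolvingSet_landmarks : IsResolvingSet (graph k) (landmarks k) := by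
  have hland : ∀ j, (landmarkVert j : verts k) ∈ (landmarks k : Set (verts k)) := by
    simp [landmarks]
  intro u v huv
  obtain hu | ⟨i, rfl⟩ := mem_cube_or_eq_landmarkVert u
  · obtain hv | ⟨j, rfl⟩ := mem_cube_or_eq_landmarkVert v
    · obtain ⟨j, hj⟩ := Function.ne_iff.1 (Subtype.coe_ne_coe.2 huv)
      refine ⟨landmarkVert j, hland j, ?_⟩
      rw [dist_landmarkVert hu, dist_landmarkVert hv]
      have := mem_cube.1 hu j
      have := mem_cube.1 hv j
      omega
    · refine ⟨landmarkVert j, hland j, ?_⟩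
      rw [SimpleGraph.dist_self]
      exact (connected.pos_dist_of_ne huv).ne'
  · refine ⟨landmarkVert i, hland i, ?_⟩
    rw [SimpleGraph.dist_self]
    exact (connected.pos_dist_of_ne huv.symm).ne

theorem metricDim_le : metricDim (graph k) ≤ k :=
  Nat.sInf_le ⟨landmarks k, isResolvingSet_landmarks, card_landmarks⟩

theorem ncard_neighborSet_center : ((graph k).neighborSet (center k)).ncard = 3 ^ k - 1 := by
  have himage : Subtype.val '' (graph k).neighborSet (center k) = cube k \ {1} := by
    ext x
    simp only [Set.mem_image, mem_neighborSet, Subtype.exists, Set.mem_sdiff,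
      Set.mem_singleton_iff]
    constructor
    · rintro ⟨x, _, hadj, rfl⟩
      obtain ⟨hne, hx⟩ := dgraph_adj_one_iff.1 hadj
      exact ⟨hx, Ne.symm hne⟩
    · rintro ⟨hx, hne⟩
      exact ⟨x, Or.inl hx, dgraph_adj_one_iff.2 ⟨Ne.symm hne, hx⟩, rfl⟩
  have hcube : cube k = ↑(Fintype.piFinset fun _ : Fin k => Finset.Iic 2) := by
    simp [cube]
  rw [← Set.ncard_image_of_injective _ Subtype.val_injective, himage,
    Set.ncard_sdiff_singleton_of_mem (mem_cube.2 fun _ => by simp), hcube, Set.ncard_coe_finset]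
  simp

end CubeWithLandmarks

theorem statement3_general (k : ℕ) :
    (∀ (V : Type) [Fintype V], ∀ G : SimpleGraph V, G.Connected → metricDim G ≤ k →
      ∀ v : V, (G.neighborSet v).ncard ≤ 3 ^ k - 1) ∧
    (∃ (V : Type) (_ : Fintype V) (G : SimpleGraph V), G.Connected ∧ metricDim G ≤ k ∧
      ∃ v : V, (G.neighborSet v).ncard = 3 ^ k - 1) :=
  ⟨fun _ _ _ hG hdim v => hG.ncard_neighborSet_le_of_metricDim_le hdim v,
    ⟨_, Fintype.ofFinite _, CubeWithLandmarks.graph k, CubeWithLandmarks.connected,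
      CubeWithLandmarks.metricDim_le, _, CubeWithLandmarks.ncard_neighborSet_center⟩⟩

/-- the maximum possible degree of a (finite connected) graph of
metric dimension at most `k` is `3^k - 1`. -/
theorem statement3 (k : ℕ) (hk : 1 ≤ k) :
    (∀ (V : Type) [Fintype V], ∀ G : SimpleGraph V, G.Connected → metricDim G ≤ k →
      ∀ v : V, (G.neighborSet v).ncard ≤ 3 ^ k - 1) ∧
    (∃ (V : Type) (_ : Fintype V) (G : SimpleGraph V), G.Connected ∧ metricDim G ≤ k ∧
      ∃ v : V, (G.neighborSet v).ncard = 3 ^ k - 1) :=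
  statement3_general k
end

section
/- For every integer k ≥ 2, the graph whose vertex set is {0,1,2}^k \ {(1,1,...,1)}, with two distinct vertices adjacent if and only if they differ by at most 1 in every coordinate, has a Hamiltonian cycle. -/
open SimpleGraph

/-- The graph on `{0,1,2}^k \ {(1,...,1)}` in which two distinct vertices are
adjacent iff they differ by at most 1 in every coordinate. -/
def punctured3Cube (k : ℕ) : SimpleGraph {x : Fin k → Fin 3 // x ≠ fun _ => 1} where
  Adj x y := x ≠ y ∧
    ∀ i, (x.val i : ℕ) ≤ (y.val i : ℕ) + 1 ∧ (y.val i : ℕ) ≤ (x.val i : ℕ) + 1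
  symm := ⟨fun _x _y h => ⟨h.1.symm, fun i => ⟨(h.2 i).2, (h.2 i).1⟩⟩⟩
  loopless := ⟨fun _x h => h.1 rfl⟩

/-!
The reflected ternary Gray code is a Hamiltonian path of the king graph on `{0,1,2}ⁿ` from
`(0,…,0)` to `(2,…,2)`. In dimension `n + 2` the punctured cube is covered by two disjoint paths:
an outer path from `(2,…,2)` to `(0,…,0)`, and a central path whose first vertex is adjacent to
`(0,…,0)` and whose last vertex is adjacent to `(2,…,2)`; together they close up to a Hamiltonian
cycle. Going up one dimension (the new coordinate is prepended), the outer path runs through the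
layer `2` along the reversed Gray code, through the punctured layer `1` along the reversed outer
path, and through the layer `0` along the reversed Gray code, while the central path is lifted
into layer `1`. In dimension `2` both paths are written down explicitly.
-/

open Matrix

namespace SimpleGraph

variable {V : Type*} {G : SimpleGraph V}

theorem isChain_reverse_adj {l : List V} :
    l.reverse.IsChain G.Adj ↔ l.IsChain G.Adj := by
  simp [List.isChain_reverse, G.adj_comm]

variable [DecidableEq V]

theorem exists_isHamiltonianCycle_of_isChain {a : V} {l : List V} (hlen : 2 ≤ l.length)
    (hchain : (a :: (l ++ [a])).IsChain G.Adj) (hnodup : (a :: l).Nodup)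
    (hmem : ∀ v, v ∈ a :: l) : ∃ p : G.Walk a a, p.IsHamiltonianCycle := by
  let p : G.Walk a a :=
    (Walk.ofSupport _ (List.cons_ne_nil _ _) hchain).copy (List.head_cons ..) (by simp)
  have hsupport : p.support.tail.Perm (a :: l) := by
    rw [Walk.support_copy, Walk.support_ofSupport]
    exact List.perm_append_singleton a l
  have hlength : p.length = l.length + 1 := by
    rw [Walk.length_copy, Walk.length_ofSupport]
    simp
  have hnil : ¬ p.Nil := by simp [← Walk.length_eq_zero_iff, hlength]
  refine ⟨p, Walk.isHamiltonianCycle_iff_isCycle_and_support_count_tail_eq_one.2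
    ⟨?_, fun v => ?_⟩⟩
  · rw [Walk.isCycle_iff_isPath_tail_and_le_length, Walk.isPath_def,
      Walk.support_tail_of_not_nil _ hnil, hsupport.nodup_iff]
    exact ⟨hnodup, by omega⟩
  · rw [hsupport.count_eq]
    exact List.count_eq_one_of_mem hnodup (hmem v)

theorem exists_isHamiltonianCycle_induce_of_isChain {s : Set V} [DecidablePred (· ∈ s)]
    {a : V} (ha : a ∈ s) {l : List V} (hlen : 2 ≤ l.length)
    (hchain : (a :: (l ++ [a])).IsChain G.Adj)
    (hcount : ∀ v, (a :: l).count v = if v ∈ s then 1 else 0) :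
    ∃ p : (G.induce s).Walk ⟨a, ha⟩ ⟨a, ha⟩, p.IsHamiltonianCycle := by
  have hnodup : (a :: l).Nodup :=
    List.nodup_iff_count_le_one.2 fun v => by rw [hcount v]; split_ifs <;> omega
  have hmem : ∀ v, v ∈ a :: l ↔ v ∈ s := fun v => by
    rw [← List.count_pos_iff, hcount v]; split_ifs <;> simp_all
  have hl : ∀ v ∈ l, v ∈ s := fun v hv => (hmem v).1 (.tail _ hv)
  refine exists_isHamiltonianCycle_of_isChain (l := l.attachWith _ hl) (by simpa using hlen)
    ((List.isChain_map Subtype.val).1 (by simpa using hchain))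
    (.of_map Subtype.val (by simpa using hnodup)) fun v => ?_
  simpa [Subtype.ext_iff] using (hmem v).2 v.2

end SimpleGraph

namespace Matrix

theorem count_map_vecCons {α : Type*} [DecidableEq α] {n : ℕ} (l : List (Fin n → α))
    (a b : α) (y : Fin n → α) :
    (l.map (vecCons a)).count (vecCons b y) = if a = b then l.count y else 0 := by
  split_ifs with hab
  · subst hab
    exact List.count_map_of_injective _ _ (fun _ _ h => (vecCons_inj.1 h).2) y
  · simp [List.count_eq_zero, vecCons_inj, hab]

theorem vecCons_eq_const_iff {α : Type*} {n : ℕ} {a b : α} {y : Fin n → α} :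
    vecCons a y = (fun _ => b) ↔ a = b ∧ y = fun _ => b := by
  rw [← vecCons_const b, vecCons_inj]

end Matrix

section KingGraph

variable {n : ℕ}

def Near (x y : Fin n → Fin 3) : Prop :=
  ∀ i, (x i : ℕ) ≤ (y i : ℕ) + 1 ∧ (y i : ℕ) ≤ (x i : ℕ) + 1

instance : DecidableRel (Near (n := n)) := fun _ _ => by unfold Near; infer_instance

theorem Near.refl (x : Fin n → Fin 3) : Near x x := fun _ => by omega

theorem Near.symm {x y : Fin n → Fin 3} (h : Near x y) : Near y x := fun i => (h i).symm

theorem near_vecCons_iff {a b : Fin 3} {x y : Fin n → Fin 3} :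
    Near (vecCons a x) (vecCons b y) ↔
      ((a : ℕ) ≤ (b : ℕ) + 1 ∧ (b : ℕ) ≤ (a : ℕ) + 1) ∧ Near x y := by
  simp [Near, Fin.forall_fin_succ]

def kingGraph (n : ℕ) : SimpleGraph (Fin n → Fin 3) where
  Adj x y := x ≠ y ∧ Near x y
  symm := ⟨fun _ _ h => ⟨h.1.symm, h.2.symm⟩⟩
  loopless := ⟨fun _ h => h.1 rfl⟩

@[simp]
theorem kingGraph_adj {x y : Fin n → Fin 3} : (kingGraph n).Adj x y ↔ x ≠ y ∧ Near x y :=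
  Iff.rfl

instance : DecidableRel (kingGraph n).Adj := fun _ _ => decidable_of_iff' _ kingGraph_adj

theorem punctured3Cube_eq_induce (k : ℕ) :
    punctured3Cube k = (kingGraph k).induce {x | x ≠ fun _ => 1} := by
  ext x y
  simp [punctured3Cube, Near, Subtype.ext_iff]

theorem kingGraph_adj_vecCons {x y : Fin n → Fin 3} (h : (kingGraph n).Adj x y) (c : Fin 3) :
    (kingGraph (n + 1)).Adj (vecCons c x) (vecCons c y) :=
  kingGraph_adj.2 ⟨fun e => h.1 (vecCons_inj.1 e).2, near_vecCons_iff.2 ⟨by omega, h.2⟩⟩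

theorem kingGraph_adj_vecCons_of_ne {a b : Fin 3} (hab : a ≠ b)
    (hab' : (a : ℕ) ≤ (b : ℕ) + 1 ∧ (b : ℕ) ≤ (a : ℕ) + 1) {x y : Fin n → Fin 3} (h : Near x y) :
    (kingGraph (n + 1)).Adj (vecCons a x) (vecCons b y) :=
  kingGraph_adj.2 ⟨fun e => hab (vecCons_inj.1 e).1, near_vecCons_iff.2 ⟨hab', h⟩⟩

theorem isChain_map_vecCons {l : List (Fin n → Fin 3)} (h : l.IsChain (kingGraph n).Adj)
    (c : Fin 3) : (l.map (vecCons c)).IsChain (kingGraph (n + 1)).Adj :=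
  (List.isChain_map _).2 (h.imp fun _ _ hxy => kingGraph_adj_vecCons hxy c)

end KingGraph

def grayCode : (n : ℕ) → List (Fin n → Fin 3)
  | 0 => [![]]
  | n + 1 =>
    (grayCode n).map (vecCons 0) ++ (grayCode n).reverse.map (vecCons 1) ++
      (grayCode n).map (vecCons 2)

theorem head?_grayCode (n : ℕ) : (grayCode n).head? = some fun _ => 0 := by
  induction n with
  | zero => exact congrArg some (Subsingleton.elim _ _)
  | succ n ih => simp [grayCode, ih, vecCons_const]

theorem getLast?_grayCode (n : ℕ) : (grayCode n).getLast? = some fun _ => 2 := by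
  induction n with
  | zero => exact congrArg some (Subsingleton.elim _ _)
  | succ n ih => simp [grayCode, List.getLast?_append, ih, vecCons_const]

theorem count_grayCode (n : ℕ) (x : Fin n → Fin 3) : (grayCode n).count x = 1 := by
  induction n with
  | zero => simp [grayCode, Subsingleton.elim x ![]]
  | succ n ih =>
    obtain ⟨c, y, rfl⟩ : ∃ c y, x = vecCons c y := ⟨_, _, (cons_head_tail x).symm⟩
    fin_cases c <;> simp [grayCode, count_map_vecCons, ih]

theorem isChain_grayCode (n : ℕ) : (grayCode n).IsChain (kingGraph n).Adj := by
  induction n with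
  | zero => exact .singleton _
  | succ n ih =>
    refine ((isChain_map_vecCons ih 0).append
      (isChain_map_vecCons (isChain_reverse_adj.2 ih) 1) ?_).append
      (isChain_map_vecCons ih 2) ?_
    · simp [getLast?_grayCode, near_vecCons_iff, Near.refl]
    · simp [List.getLast?_append, head?_grayCode, getLast?_grayCode, near_vecCons_iff, Near.refl]

def centralPath : (n : ℕ) → List (Fin (n + 2) → Fin 3)
  | 0 => [![0, 1], ![0, 2], ![1, 2]]
  | n + 1 => (centralPath n).map (vecCons 1)

def outerPath : (n : ℕ) → List (Fin (n + 2) → Fin 3)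
  | 0 => [![2, 2], ![2, 1], ![2, 0], ![1, 0], ![0, 0]]
  | n + 1 =>
    (grayCode (n + 2)).reverse.map (vecCons 2) ++ (outerPath n).reverse.map (vecCons 1) ++
      (grayCode (n + 2)).reverse.map (vecCons 0)

theorem isChain_centralPath (n : ℕ) : (centralPath n).IsChain (kingGraph (n + 2)).Adj := by
  induction n with
  | zero => decide
  | succ n ih => exact isChain_map_vecCons ih 1

theorem exists_head?_centralPath (n : ℕ) :
    ∃ u, (centralPath n).head? = some u ∧ (kingGraph (n + 2)).Adj (fun _ => 0) u := by
  induction n with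
  | zero => exact ⟨_, rfl, by decide⟩
  | succ n ih =>
    obtain ⟨u, hu, h⟩ := ih
    refine ⟨vecCons 1 u, by simp [centralPath, hu], ?_⟩
    rw [← vecCons_const]
    exact kingGraph_adj_vecCons_of_ne (by decide) (by decide) h.2

theorem exists_getLast?_centralPath (n : ℕ) :
    ∃ v, (centralPath n).getLast? = some v ∧ (kingGraph (n + 2)).Adj v (fun _ => 2) := by
  induction n with
  | zero => exact ⟨_, rfl, by decide⟩
  | succ n ih =>
    obtain ⟨v, hv, h⟩ := ih
    refine ⟨vecCons 1 v, by simp [centralPath, hv], ?_⟩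
    rw [← vecCons_const]
    exact kingGraph_adj_vecCons_of_ne (by decide) (by decide) h.2

theorem head?_outerPath (n : ℕ) : (outerPath n).head? = some fun _ => 2 := by
  cases n with
  | zero => exact congrArg some (by decide)
  | succ n => simp [outerPath, getLast?_grayCode, vecCons_const]

theorem getLast?_outerPath (n : ℕ) : (outerPath n).getLast? = some fun _ => 0 := by
  cases n with
  | zero => exact congrArg some (by decide)
  | succ n => simp [outerPath, List.getLast?_append, head?_grayCode, vecCons_const]

theorem isChain_outerPath (n : ℕ) : (outerPath n).IsChain (kingGraph (n + 2)).Adj := by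
  induction n with
  | zero => decide
  | succ n ih =>
    have hG := isChain_reverse_adj.2 (isChain_grayCode (n + 2))
    refine ((isChain_map_vecCons hG 2).append
      (isChain_map_vecCons (isChain_reverse_adj.2 ih) 1) ?_).append
      (isChain_map_vecCons hG 0) ?_
    · simp [head?_grayCode, getLast?_outerPath, near_vecCons_iff, Near.refl]
    · simp [List.getLast?_append, getLast?_grayCode, head?_outerPath, near_vecCons_iff,
        Near.refl]

theorem three_le_length_outerPath (n : ℕ) : 3 ≤ (outerPath n).length := by
  induction n with
  | zero => decide
  | succ n ih =>
    simp only [outerPath, List.length_append, List.length_map, List.length_reverse]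
    omega

theorem count_outerPath_append_centralPath (n : ℕ) (x : Fin (n + 2) → Fin 3) :
    (outerPath n ++ centralPath n).count x = if x = (fun _ => 1) then 0 else 1 := by
  induction n with
  | zero => revert x; decide
  | succ n ih =>
    obtain ⟨c, y, rfl⟩ : ∃ c y, x = vecCons c y := ⟨_, _, (cons_head_tail x).symm⟩
    fin_cases c <;> simp [outerPath, centralPath, count_map_vecCons, count_grayCode,
      vecCons_eq_const_iff, ← ih y]

theorem exists_isHamiltonianCycle_punctured3Cube (n : ℕ) :
    ∃ (a : {x : Fin (n + 2) → Fin 3 // x ≠ fun _ => 1})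
      (p : (punctured3Cube (n + 2)).Walk a a), p.IsHamiltonianCycle := by
  obtain ⟨B, hB⟩ := List.head?_eq_some_iff.1 (head?_outerPath n)
  obtain ⟨u, hu, hu0⟩ := exists_head?_centralPath n
  obtain ⟨v, hv, hv2⟩ := exists_getLast?_centralPath n
  have hcycle :
      (outerPath n ++ centralPath n ++ [fun _ => 2]).IsChain (kingGraph (n + 2)).Adj := by
    refine ((isChain_outerPath n).append (isChain_centralPath n) ?_).append (.singleton _) ?_
    · simpa [getLast?_outerPath, hu] using hu0
    · simpa [List.getLast?_append, hv] using hv2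
  have hlen : 2 ≤ B.length := by simpa [hB] using three_le_length_outerPath n
  rw [hB] at hcycle
  have h2 : (fun _ => 2) ∈ {x : Fin (n + 2) → Fin 3 | x ≠ fun _ => 1} :=
    fun h => absurd (congrFun h 0) (by decide)
  rw [punctured3Cube_eq_induce]
  exact ⟨_, exists_isHamiltonianCycle_induce_of_isChain h2 (l := B ++ centralPath n)
    (by rw [List.length_append]; omega) (by simpa using hcycle)
    (by simpa [hB] using count_outerPath_append_centralPath n)⟩

/-- for `k ≥ 2`, the graph on `{0,1,2}^k \ {(1,...,1)}` (adjacent iff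
differing by at most 1 in every coordinate) has a Hamiltonian cycle. -/
theorem statement4 (k : ℕ) (hk : 2 ≤ k) :
    ∃ (a : {x : Fin k → Fin 3 // x ≠ fun _ => 1}) (p : (punctured3Cube k).Walk a a),
      p.IsHamiltonianCycle := by
  obtain ⟨n, rfl⟩ := Nat.exists_eq_add_of_le' hk
  exact exists_isHamiltonianCycle_punctured3Cube n
end

section
/- Let G be a finite connected simple graph of order n, and suppose G has a vertex v of degree n − 1 − x such that every vertex of G is within graph distance 2 of v. Then the edge metric dimension of G satisfies edim(G) ≥ n − 1 − x − 2^x. -/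
open SimpleGraph

/-!
Fix an edge resolving set `S`. For a neighbour `u ∉ S` of `v`, the edge `uv` lies at distance
`d(v,w)` or `d(v,w) - 1` from every vertex `w`, and exactly at distance `d(v,w)` when
`d(v,w) ≤ 1` (as `u ≠ w`). So the edges `uv`, `u ∈ N(v) \ S`, are told apart only by the
landmarks of `S` at distance at least 2 from `v`, each of which contributes one bit. There are at
most `x` such landmarks, so `|N(v) \ S| ≤ 2^x` and `n - 1 - x = |N(v)| ≤ |S| + 2^x`.
-/

namespace SimpleGraph

variable {V : Type*} {G : SimpleGraph V}

theorem edgeDist_mk (a b w : V) : edgeDist G s(a, b) w = min (G.dist a w) (G.dist b w) := rfl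

theorem Connected.isEdgeResolvingSet_univ (hG : G.Connected) : IsEdgeResolvingSet G Set.univ := by
  intro e he f hf hef
  induction e using Sym2.inductionOn with | hf a b => ?_
  induction f using Sym2.inductionOn with | hf c d => ?_
  have hab : G.Adj a b := he
  have hcd : G.Adj c d := hf
  obtain ⟨w, hw, hwc, hwd⟩ : ∃ w, (w = a ∨ w = b) ∧ w ≠ c ∧ w ≠ d := by
    by_cases hac : a = c
    · subst hac
      exact ⟨b, Or.inr rfl, hab.ne.symm, fun hbd => hef (by rw [hbd])⟩
    by_cases had : a = d
    · subst had
      exact ⟨b, Or.inr rfl, fun hbc => hef (by rw [hbc, Sym2.eq_swap]), hab.ne.symm⟩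
    exact ⟨a, Or.inl rfl, hac, had⟩
  refine ⟨w, Set.mem_univ w, ?_⟩
  have hzero : edgeDist G s(a, b) w = 0 := by
    rcases hw with rfl | rfl <;> simp [edgeDist_mk]
  have hpos : 0 < edgeDist G s(c, d) w :=
    lt_min (hG.pos_dist_of_ne (Ne.symm hwc)) (hG.pos_dist_of_ne (Ne.symm hwd))
  omega

theorem Connected.le_edgeMetricDim [Fintype V] (hG : G.Connected) {k : ℕ}
    (h : ∀ S : Finset V, IsEdgeResolvingSet G ↑S → k ≤ S.card) : k ≤ edgeMetricDim G := by
  classical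
  refine le_csInf ⟨_, Finset.univ, by simpa using hG.isEdgeResolvingSet_univ, rfl⟩ ?_
  rintro _ ⟨S, hS, rfl⟩
  exact h S hS

theorem Adj.edgeDist_mk_eq_or {u v : V} (huv : G.Adj u v) (w : V) :
    edgeDist G s(u, v) w = G.dist v w ∨ edgeDist G s(u, v) w + 1 = G.dist v w := by
  have h := huv.symm.diff_dist_adj (u := w)
  rw [dist_comm (u := w), dist_comm (u := w)] at h
  rw [edgeDist_mk]
  omega

theorem Connected.edgeDist_mk_eq_dist_of_dist_le_one (hG : G.Connected) {u v w : V}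
    (huw : u ≠ w) (hvw : G.dist v w ≤ 1) : edgeDist G s(u, v) w = G.dist v w := by
  rw [edgeDist_mk]
  have := hG.pos_dist_of_ne huw
  omega

theorem Connected.card_neighborFinset_sdiff_le [Fintype V] [DecidableEq V] [DecidableRel G.Adj]
    (hG : G.Connected) {S : Finset V} (hS : IsEdgeResolvingSet G ↑S) (v : V) :
    (G.neighborFinset v \ S).card ≤ 2 ^ (S.filter (1 < G.dist v ·)).card := by
  set F := S.filter (1 < G.dist v ·)
  let signature (u : V) (w : F) : Bool := decide (edgeDist G s(u, v) w = G.dist v w)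
  have hinj : Set.InjOn signature ↑(G.neighborFinset v \ S) := by
    intro u hu u' hu' hsig
    simp only [Finset.coe_sdiff, Set.mem_sdiff, Finset.mem_coe, mem_neighborFinset] at hu hu'
    by_contra hne
    have hedge : s(u, v) ≠ s(u', v) := fun h => hne (by simpa [hu.1.ne'] using h)
    obtain ⟨w, hwS, hw⟩ :=
      hS _ (G.mem_edgeSet.2 hu.1.symm) _ (G.mem_edgeSet.2 hu'.1.symm) hedge
    have hwF : w ∈ F := by
      refine Finset.mem_filter.2 ⟨hwS, not_le.1 fun hvw => hw ?_⟩
      rw [hG.edgeDist_mk_eq_dist_of_dist_le_one (ne_of_mem_of_not_mem hwS hu.2).symm hvw,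
        hG.edgeDist_mk_eq_dist_of_dist_le_one (ne_of_mem_of_not_mem hwS hu'.2).symm hvw]
    have hbit := congrFun hsig ⟨w, hwF⟩
    simp only [signature, decide_eq_decide] at hbit
    rcases hu.1.symm.edgeDist_mk_eq_or w with h | h <;>
      rcases hu'.1.symm.edgeDist_mk_eq_or w with h' | h' <;> omega
  calc (G.neighborFinset v \ S).card
      ≤ (Finset.univ : Finset (F → Bool)).card :=
        Finset.card_le_card_of_injOn signature (fun _ _ => Finset.mem_coe.2 (Finset.mem_univ _)) hinj
    _ = 2 ^ F.card := by simp

theorem card_filter_one_lt_dist_add_degree_lt [Fintype V] [DecidableEq V] [DecidableRel G.Adj]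
    (S : Finset V) (v : V) : (S.filter (1 < G.dist v ·)).card + G.degree v < Fintype.card V := by
  have hdisj : Disjoint (S.filter (1 < G.dist v ·)) (G.neighborFinset v) := by
    refine Finset.disjoint_left.2 fun w hw hadj => ?_
    rw [Finset.mem_filter] at hw
    rw [mem_neighborFinset, ← dist_eq_one_iff_adj] at hadj
    omega
  have hv : v ∉ S.filter (1 < G.dist v ·) ∪ G.neighborFinset v := by simp
  rw [← card_neighborFinset_eq_degree, ← Finset.card_union_of_disjoint hdisj]
  exact Finset.card_lt_univ_of_notMem hv

end SimpleGraph

theorem statement14_general {V : Type*} [Fintype V] (G : SimpleGraph V) (hG : G.Connected)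
    (v : V) (x : ℕ) (hdeg : (G.neighborSet v).ncard + x + 1 = Fintype.card V) :
    Fintype.card V - 1 - x - 2 ^ x ≤ edgeMetricDim G := by
  classical
  have hdegree : G.degree v + x + 1 = Fintype.card V := by
    rwa [← card_neighborFinset_eq_degree, neighborFinset_def, ← Set.ncard_eq_toFinset_card']
  refine hG.le_edgeMetricDim fun S hS => ?_
  have hfar : (S.filter (1 < G.dist v ·)).card ≤ x := by
    have := card_filter_one_lt_dist_add_degree_lt (G := G) S v
    omega
  have hsplit := Finset.card_le_card_sdiff_add_card (s := G.neighborFinset v) (t := S)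
  have hbits := (hG.card_neighborFinset_sdiff_le hS v).trans
    (Nat.pow_le_pow_right two_pos hfar)
  rw [card_neighborFinset_eq_degree] at hsplit
  omega

/-- if a finite connected graph `G` of order `n` has a vertex `v` of
degree `n - 1 - x` within distance 2 of every vertex, then
`edim(G) ≥ n - 1 - x - 2^x`. -/
theorem statement14 {V : Type*} [Fintype V] (G : SimpleGraph V) (hG : G.Connected)
    (v : V) (x : ℕ) (hdeg : (G.neighborSet v).ncard + x + 1 = Fintype.card V)
    (hdist : ∀ u : V, G.dist v u ≤ 2) :
    Fintype.card V - 1 - x - 2 ^ x ≤ edgeMetricDim G :=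
  statement14_general G hG v x hdeg
end
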